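/- Let X be a Polish space and let μ be a Borel probability measure on X. Then the map ν ↦ KL(μ ‖ ν) on Borel probability measures on X is lower semicontinuous with respect to weak convergence: if ν_n converges weakly to ν, then KL(μ ‖ ν) ≤ liminf_{n→∞} KL(μ ‖ ν_n). -/

import Mathlib

/-!
For bounded `f`, Young's inequality `t s ≤ (t log t - t + 1) + (exp s - 1)` applied to
`t = dμ/dν`, `s = f` gives `KL(μ ‖ ν) ≥ ∫ f dμ - ∫ exp f dν + 1`. The bound is sharp: along the
truncations of `log (dμ/dν)` by Fatou's lemma, and along `c • 1_s` with `s` a `ν`-null set charged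
by `μ` when `μ` is not absolutely continuous. On a metrizable space the bounded measurable `f` may
be replaced by bounded continuous ones (approximate in `L¹(μ + ν)`, then clamp), so `KL(μ ‖ ·)` is
a supremum of the functionals `ν ↦ ∫ g dμ - ∫ exp g dν + 1`, `g` bounded continuous. Each is
continuous for weak convergence, and a supremum of continuous functions is lower semicontinuous.
-/

open MeasureTheory Filter
open scoped ENNReal Classical

/-- Kullback–Leibler divergence `KL(μ ‖ ν) = ∫ log (dμ/dν) dμ` when `μ ≪ ν` (and the
log-likelihood ratio is integrable, which for probability measures is equivalent to the
integral being finite), and `KL(μ ‖ ν) = ∞` otherwise; valued in `[0, ∞]`. -/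
noncomputable def klDiv {X : Type*} [MeasurableSpace X] (μ ν : Measure X) : ℝ≥0∞ :=
  if μ ≪ ν ∧ Integrable (llr μ ν) μ then ENNReal.ofReal (∫ x, llr μ ν x ∂μ) else ⊤

open Real Set Topology
open scoped BoundedContinuousFunction
open InformationTheory (klFun klFun_apply klFun_nonneg)

theorem ofReal_integral_le_lintegral_ofReal {α : Type*} [MeasurableSpace α] (μ : Measure α)
    (f : α → ℝ) : ENNReal.ofReal (∫ x, f x ∂μ) ≤ ∫⁻ x, ENNReal.ofReal (f x) ∂μ := by
  by_cases hf : Integrable f μ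
  · calc ENNReal.ofReal (∫ x, f x ∂μ) ≤ ENNReal.ofReal (∫ x, max (f x) 0 ∂μ) :=
          ENNReal.ofReal_le_ofReal (integral_mono hf hf.pos_part fun x => le_max_left _ _)
      _ = ∫⁻ x, ENNReal.ofReal (max (f x) 0) ∂μ :=
          ofReal_integral_eq_lintegral_ofReal hf.pos_part
            (Eventually.of_forall fun x => le_max_right _ _)
      _ = ∫⁻ x, ENNReal.ofReal (f x) ∂μ := by simp [ENNReal.ofReal_max]
  · simp [integral_undef hf]

theorem abs_exp_sub_exp_le {a b B : ℝ} (ha : a ≤ B) (hb : b ≤ B) :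
    |exp a - exp b| ≤ exp B * |a - b| := by
  simpa [Real.norm_eq_abs] using (convex_Iic B).norm_image_sub_le_of_norm_deriv_le
    (fun x _ => differentiableAt_exp)
    (fun x hx => by simpa [abs_of_pos (exp_pos x)] using exp_le_exp.2 hx) hb ha

theorem mul_sub_exp_add_one_le_klFun {s t : ℝ} (ht : 0 ≤ t) : t * s - exp s + 1 ≤ klFun t := by
  rw [klFun_apply]
  rcases ht.eq_or_lt with rfl | ht
  · simp [(exp_pos s).le]
  · have h := mul_le_mul_of_nonneg_left (add_one_le_exp (s - log t)) ht.le
    rw [exp_sub, exp_log ht, mul_div_cancel₀ _ ht.ne'] at h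
    linarith

theorem mul_sub_exp_add_one_nonneg {s t : ℝ} (h : 0 ≤ (t - exp s) * s) :
    0 ≤ t * s - exp s + 1 := by
  have := klFun_nonneg (exp_pos s).le
  rw [klFun_apply, log_exp] at this
  nlinarith

/-- `log t` truncated to `[-k, k]`. At `t = 0` it is `-k`, the limit of `truncLog k t` as
`t → 0⁺`, rather than the truncation of the junk value `log 0 = 0`. -/
noncomputable def truncLog (k : ℕ) (t : ℝ) : ℝ :=
  if t = 0 then -k else max (-k) (min (log t) k)

theorem measurable_truncLog (k : ℕ) : Measurable (truncLog k) :=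
  Measurable.ite (measurableSet_singleton 0) measurable_const (by fun_prop)

theorem abs_truncLog_le (k : ℕ) (t : ℝ) : |truncLog k t| ≤ k := by
  unfold truncLog
  split_ifs
  · simp
  · exact abs_le.2
      ⟨le_max_left _ _, max_le (by linarith [k.cast_nonneg (α := ℝ)]) (min_le_right _ _)⟩

theorem sub_exp_truncLog_mul_truncLog_nonneg (k : ℕ) {t : ℝ} (ht : 0 ≤ t) :
    0 ≤ (t - exp (truncLog k t)) * truncLog k t := by
  unfold truncLog
  split_ifs with h0
  · simp only [h0, zero_sub, neg_mul_neg]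
    positivity
  have ht : 0 < t := lt_of_le_of_ne ht (Ne.symm h0)
  set s := max (-(k : ℝ)) (min (log t) k)
  rcases le_total 0 (log t) with hL | hL
  · have hs : 0 ≤ s := le_max_of_le_right (le_min hL k.cast_nonneg)
    have hsL : s ≤ log t := max_le (by linarith) (min_le_left _ _)
    exact mul_nonneg (sub_nonneg.2 ((exp_le_exp.2 hsL).trans (exp_log ht).le)) hs
  · have hs : s ≤ 0 := max_le (by simp) (min_le_of_left_le hL)
    have hsL : log t ≤ s := le_max_of_le_right (le_min le_rfl (hL.trans k.cast_nonneg))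
    exact mul_nonneg_of_nonpos_of_nonpos
      (sub_nonpos.2 ((exp_log ht).symm.le.trans (exp_le_exp.2 hsL))) hs

theorem tendsto_truncLog_klFun {t : ℝ} (ht : 0 ≤ t) :
    Tendsto (fun k => t * truncLog k t - exp (truncLog k t) + 1) atTop (𝓝 (klFun t)) := by
  rcases ht.eq_or_lt with rfl | ht
  · simpa [truncLog, InformationTheory.klFun_zero, neg_add_eq_sub] using
      (tendsto_exp_neg_atTop_nhds_zero.comp tendsto_natCast_atTop_atTop).const_sub 1
  · refine tendsto_const_nhds.congr' ?_
    filter_upwards [eventually_ge_atTop ⌈|log t|⌉₊] with k hk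
    have hk : |log t| ≤ k := (Nat.le_ceil _).trans (by exact_mod_cast hk)
    rw [truncLog, if_neg ht.ne', min_eq_left (abs_le.1 hk).2, max_eq_right (abs_le.1 hk).1,
      klFun_apply, exp_log ht]
    ring

section

variable {X : Type*} [MeasurableSpace X] {μ ν : Measure X}

noncomputable def klVariational (μ ν : Measure X) (f : X → ℝ) : ℝ :=
  ∫ x, f x ∂μ - ∫ x, exp (f x) ∂ν + 1

theorem klVariational_eq_integral_rnDeriv [SigmaFinite μ] [IsProbabilityMeasure ν]
    (hμν : μ ≪ ν) {f : X → ℝ} (hf : Integrable f μ) (hef : Integrable (fun x => exp (f x)) ν) :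
    klVariational μ ν f = ∫ x, ((μ.rnDeriv ν x).toReal * f x - exp (f x) + 1) ∂ν := by
  have hgf := (integrable_rnDeriv_smul_iff hμν).2 hf
  simp only [smul_eq_mul] at hgf
  rw [integral_add (f := fun x => (μ.rnDeriv ν x).toReal * f x - exp (f x)) (hgf.sub hef)
      (integrable_const 1), integral_sub hgf hef, klVariational,
    ← integral_rnDeriv_smul hμν]
  simp

theorem klDiv_eq_lintegral_klFun_of_ac [IsProbabilityMeasure μ] [IsProbabilityMeasure ν]
    (hμν : μ ≪ ν) :
    klDiv μ ν = ∫⁻ x, ENNReal.ofReal (klFun (μ.rnDeriv ν x).toReal) ∂ν := by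
  rw [← InformationTheory.klDiv_eq_lintegral_klFun_of_ac hμν, klDiv]
  split_ifs with h
  · simp [InformationTheory.klDiv_of_ac_of_integrable h.1 h.2]
  · exact (InformationTheory.klDiv_of_not_integrable fun hi => h ⟨hμν, hi⟩).symm

theorem ofReal_klVariational_le_klDiv [IsProbabilityMeasure μ] [IsProbabilityMeasure ν]
    {f : X → ℝ} (hf : Integrable f μ) (hef : Integrable (fun x => exp (f x)) ν) :
    ENNReal.ofReal (klVariational μ ν f) ≤ klDiv μ ν := by
  by_cases hμν : μ ≪ ν
  · rw [klVariational_eq_integral_rnDeriv hμν hf hef, klDiv_eq_lintegral_klFun_of_ac hμν]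
    exact (ofReal_integral_le_lintegral_ofReal _ _).trans <| lintegral_mono fun x =>
      ENNReal.ofReal_le_ofReal (mul_sub_exp_add_one_le_klFun ENNReal.toReal_nonneg)
  · simp [klDiv, hμν]

theorem integrable_exp_of_abs_le [IsFiniteMeasure μ] {f : X → ℝ} (hf : Measurable f) {B : ℝ}
    (hB : ∀ x, |f x| ≤ B) : Integrable (fun x => exp (f x)) μ :=
  .of_bound hf.exp.aestronglyMeasurable (exp B) <| .of_forall fun x => by
    simpa [abs_of_pos (exp_pos _)] using exp_le_exp.2 (le_of_abs_le (hB x))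

theorem klDiv_le_liminf_ofReal_klVariational_truncLog [IsProbabilityMeasure μ]
    [IsProbabilityMeasure ν] (hμν : μ ≪ ν) :
    klDiv μ ν ≤ liminf (fun k : ℕ => ENNReal.ofReal
      (klVariational μ ν fun x => truncLog k (μ.rnDeriv ν x).toReal)) atTop := by
  set g : X → ℝ := fun x => (μ.rnDeriv ν x).toReal
  have hf (k : ℕ) : Measurable fun x => truncLog k (g x) :=
    (measurable_truncLog k).comp (μ.measurable_rnDeriv ν).ennreal_toReal
  set φ : ℕ → X → ℝ := fun k x => g x * truncLog k (g x) - exp (truncLog k (g x)) + 1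
  have hφ (k : ℕ) : ENNReal.ofReal (klVariational μ ν fun x => truncLog k (g x)) =
      ∫⁻ x, ENNReal.ofReal (φ k x) ∂ν := by
    have hfB (x : X) := abs_truncLog_le k (g x)
    have hfi : Integrable (fun x => truncLog k (g x)) μ :=
      .of_bound (hf k).aestronglyMeasurable k (.of_forall hfB)
    have hef := integrable_exp_of_abs_le (μ := ν) (hf k) hfB
    rw [klVariational_eq_integral_rnDeriv hμν hfi hef]
    exact ofReal_integral_eq_lintegral_ofReal
      ((((integrable_rnDeriv_smul_iff hμν).2 hfi).sub hef).add (integrable_const 1))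
      (.of_forall fun x => mul_sub_exp_add_one_nonneg
        (sub_exp_truncLog_mul_truncLog_nonneg k ENNReal.toReal_nonneg))
  calc klDiv μ ν = ∫⁻ x, ENNReal.ofReal (klFun (g x)) ∂ν := klDiv_eq_lintegral_klFun_of_ac hμν
    _ = ∫⁻ x, liminf (fun k => ENNReal.ofReal (φ k x)) atTop ∂ν := lintegral_congr fun x =>
        ((ENNReal.continuous_ofReal.tendsto _).comp
          (tendsto_truncLog_klFun ENNReal.toReal_nonneg)).liminf_eq.symm
    _ ≤ liminf (fun k => ∫⁻ x, ENNReal.ofReal (φ k x) ∂ν) atTop := lintegral_liminf_le fun k =>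
        (((μ.measurable_rnDeriv ν).ennreal_toReal.mul (hf k)).sub (hf k).exp).add_const 1
          |>.ennreal_ofReal
    _ = _ := congrArg (liminf · atTop) (funext fun k => (hφ k).symm)

theorem klVariational_indicator_const [IsProbabilityMeasure ν] {s : Set X} (hs : MeasurableSet s)
    (hνs : ν s = 0) (c : ℝ) : klVariational μ ν (s.indicator fun _ => c) = μ.real s * c := by
  have hexp : (fun x => exp (s.indicator (fun _ => c) x)) =ᵐ[ν] fun _ => 1 := by
    filter_upwards [measure_eq_zero_iff_ae_notMem.1 hνs] with x hx
    simp [hx]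
  rw [klVariational, integral_indicator_const c hs, integral_congr_ae hexp]
  simp

theorem abs_klVariational_sub_le [IsFiniteMeasure μ] [IsFiniteMeasure ν] {f g : X → ℝ}
    (hf : Measurable f) (hg : Measurable g) {B : ℝ} (hfB : ∀ x, |f x| ≤ B) (hgB : ∀ x, |g x| ≤ B) :
    |klVariational μ ν f - klVariational μ ν g| ≤ (1 + exp B) * ∫ x, |f x - g x| ∂(μ + ν) := by
  have hi {ρ : Measure X} [IsFiniteMeasure ρ] {h : X → ℝ} (hh : Measurable h)
      (hhB : ∀ x, |h x| ≤ B) : Integrable h ρ :=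
    .of_bound hh.aestronglyMeasurable B (.of_forall hhB)
  have hef := integrable_exp_of_abs_le (μ := ν) hf hfB
  have heg := integrable_exp_of_abs_le (μ := ν) hg hgB
  have hfg (ρ : Measure X) [IsFiniteMeasure ρ] : Integrable (fun x => |f x - g x|) ρ :=
    ((hi hf hfB).sub (hi hg hgB)).abs
  have hμ : 0 ≤ ∫ x, |f x - g x| ∂μ := integral_nonneg fun x => abs_nonneg _
  have hν : 0 ≤ ∫ x, |f x - g x| ∂ν := integral_nonneg fun x => abs_nonneg _
  calc |klVariational μ ν f - klVariational μ ν g|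
      = |∫ x, (f x - g x) ∂μ - ∫ x, (exp (f x) - exp (g x)) ∂ν| := by
        rw [klVariational, klVariational, integral_sub (hi hf hfB) (hi hg hgB),
          integral_sub hef heg]
        ring_nf
    _ ≤ ∫ x, |f x - g x| ∂μ + ∫ x, |exp (f x) - exp (g x)| ∂ν :=
        (abs_sub _ _).trans (add_le_add abs_integral_le_integral_abs abs_integral_le_integral_abs)
    _ ≤ ∫ x, |f x - g x| ∂μ + ∫ x, exp B * |f x - g x| ∂ν :=
        add_le_add_right (integral_mono (hef.sub heg).abs ((hfg ν).const_mul _) fun x =>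
          abs_exp_sub_exp_le (le_of_abs_le (hfB x)) (le_of_abs_le (hgB x))) _
    _ ≤ (1 + exp B) * ∫ x, |f x - g x| ∂(μ + ν) := by
        rw [integral_const_mul, integral_add_measure (hfg μ) (hfg ν)]
        nlinarith [exp_pos B]

section Topological

variable [TopologicalSpace X]

theorem tendsto_klVariational_of_tendsto_weakly {ι : Type*} {l : Filter ι} {ν : ι → Measure X}
    {νlim : Measure X}
    (hweak : ∀ f : X →ᵇ ℝ, Tendsto (fun n => ∫ x, f x ∂(ν n)) l (𝓝 (∫ x, f x ∂νlim)))
    (g : X →ᵇ ℝ) : Tendsto (fun n => klVariational μ (ν n) g) l (𝓝 (klVariational μ νlim g)) := by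
  let expg : X →ᵇ ℝ := .ofNormedAddCommGroup (fun x => exp (g x)) (by fun_prop) (exp ‖g‖)
    fun x => by
      simpa [abs_of_pos (exp_pos _)] using exp_le_exp.2 (le_of_abs_le (g.norm_coe_le_norm x))
  exact (tendsto_const_nhds.sub (hweak expg)).add tendsto_const_nhds

variable [TopologicalSpace.PseudoMetrizableSpace X] [BorelSpace X]

theorem exists_boundedContinuous_abs_le_integral_abs_sub_le {ρ : Measure X} [IsFiniteMeasure ρ]
    {f : X → ℝ} (hf : Measurable f) {B : ℝ} (hB : ∀ x, |f x| ≤ B) {ε : ℝ} (hε : 0 < ε) :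
    ∃ g : X →ᵇ ℝ, (∀ x, |g x| ≤ B) ∧ ∫ x, |f x - g x| ∂ρ ≤ ε := by
  rcases isEmpty_or_nonempty X with hX | ⟨⟨x₀⟩⟩
  · exact ⟨0, isEmptyElim, by simp [Measure.eq_zero_of_isEmpty ρ, hε.le]⟩
  have hB₀ : -B ≤ B := by linarith [(abs_nonneg (f x₀)).trans (hB x₀)]
  have hfi : Integrable f ρ := .of_bound hf.aestronglyMeasurable B (.of_forall hB)
  obtain ⟨g₀, hg₀, hg₀i⟩ := hfi.exists_boundedContinuous_integral_sub_le hε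
  let g : X →ᵇ ℝ := g₀.comp (fun a => (projIcc (-B) B hB₀ a : ℝ))
    ((LipschitzWith.subtype_val _).comp (LipschitzWith.projIcc hB₀))
  refine ⟨g, fun x => abs_le.2 (projIcc (-B) B hB₀ (g₀ x)).2, (integral_mono
    (hfi.sub (g.integrable ρ)).abs (hfi.sub hg₀i).norm fun x => ?_).trans hg₀⟩
  -- clamping `g₀` to `[-B, B]` keeps it at least as close to `f`, which takes values there
  have hfx : f x = projIcc (-B) B hB₀ (f x) := by rw [projIcc_of_mem hB₀ (abs_le.1 (hB x))]
  simpa [g, Real.norm_eq_abs, ← hfx] using abs_projIcc_sub_projIcc hB₀ (c := f x) (d := g₀ x)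

theorem ofReal_klVariational_le_iSup_boundedContinuous [IsFiniteMeasure μ] [IsFiniteMeasure ν]
    {f : X → ℝ} (hf : Measurable f) {B : ℝ} (hB : ∀ x, |f x| ≤ B) :
    ENNReal.ofReal (klVariational μ ν f) ≤ ⨆ g : X →ᵇ ℝ, ENNReal.ofReal (klVariational μ ν g) := by
  refine ENNReal.le_of_forall_pos_le_add fun ε hε _ => ?_
  have hc : 0 < 1 + exp B := by positivity
  obtain ⟨g, hgB, hfg⟩ := exists_boundedContinuous_abs_le_integral_abs_sub_le (ρ := μ + ν) hf hB
    (div_pos hε hc)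
  have hD : klVariational μ ν f ≤ klVariational μ ν g + ε := by
    have hclose := (abs_le.1 (abs_klVariational_sub_le (μ := μ) (ν := ν) hf
      g.continuous.measurable hB hgB)).2
    have hε' := mul_le_mul_of_nonneg_left hfg hc.le
    rw [mul_div_cancel₀ _ hc.ne'] at hε'
    exact (sub_le_iff_le_add'.1 hclose).trans (add_le_add_right hε' _)
  calc ENNReal.ofReal (klVariational μ ν f) ≤ ENNReal.ofReal (klVariational μ ν g) + ε := by
        simpa using (ENNReal.ofReal_le_ofReal hD).trans ENNReal.ofReal_add_le
    _ ≤ (⨆ g : X →ᵇ ℝ, ENNReal.ofReal (klVariational μ ν g)) + ε := by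
        gcongr
        exact le_iSup (fun g : X →ᵇ ℝ => ENNReal.ofReal (klVariational μ ν g)) g

theorem klDiv_le_iSup_ofReal_klVariational [IsProbabilityMeasure μ] [IsProbabilityMeasure ν] :
    klDiv μ ν ≤ ⨆ g : X →ᵇ ℝ, ENNReal.ofReal (klVariational μ ν g) := by
  by_cases hμν : μ ≪ ν
  · refine (klDiv_le_liminf_ofReal_klVariational_truncLog hμν).trans
      (liminf_le_of_frequently_le' (.of_forall fun k => ?_))
    exact ofReal_klVariational_le_iSup_boundedContinuous
      ((measurable_truncLog k).comp (μ.measurable_rnDeriv ν).ennreal_toReal)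
      fun x => abs_truncLog_le k _
  obtain ⟨s, hs, hνs, hμs⟩ : ∃ s, MeasurableSet s ∧ ν s = 0 ∧ μ s ≠ 0 := by
    by_contra! h
    exact hμν (.mk h)
  have hμs : 0 < μ.real s := ENNReal.toReal_pos hμs (measure_ne_top μ s)
  refine le_top.trans (ENNReal.eq_top_of_forall_nnreal_le fun r => ?_).ge
  have := ofReal_klVariational_le_iSup_boundedContinuous (μ := μ) (ν := ν)
    (measurable_const.indicator hs) fun x => by
      simpa only [Real.norm_eq_abs] using norm_indicator_le_norm_self (fun _ => r / μ.real s) x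
  rwa [klVariational_indicator_const hs hνs, mul_div_cancel₀ _ hμs.ne',
    ENNReal.ofReal_coe_nnreal] at this

end Topological

end

/-- **Lower semicontinuity of the KL divergence in its second argument** with respect to
weak convergence of probability measures on a Polish space: if `ν n → ν` weakly then
`KL(μ ‖ ν) ≤ liminf_n KL(μ ‖ ν n)`. -/
theorem klDiv_le_liminf_of_tendsto_weakly
    {X : Type*} [TopologicalSpace X] [PolishSpace X] [MeasurableSpace X] [BorelSpace X]
    (μ : Measure X) [IsProbabilityMeasure μ]
    (ν : ℕ → Measure X) [∀ n, IsProbabilityMeasure (ν n)]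
    (νlim : Measure X) [IsProbabilityMeasure νlim]
    (hweak : ∀ f : BoundedContinuousFunction X ℝ,
      Tendsto (fun n => ∫ x, f x ∂(ν n)) atTop (nhds (∫ x, f x ∂νlim))) :
    klDiv μ νlim ≤ liminf (fun n => klDiv μ (ν n)) atTop := by
  refine klDiv_le_iSup_ofReal_klVariational.trans (iSup_le fun g => ?_)
  rw [← ((ENNReal.continuous_ofReal.tendsto _).comp
    (tendsto_klVariational_of_tendsto_weakly hweak g)).liminf_eq]
  exact liminf_le_liminf (.of_forall fun n => ofReal_klVariational_le_klDiv (g.integrable μ)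
    (integrable_exp_of_abs_le g.continuous.measurable g.norm_coe_le_norm))
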